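/- Let P be a d-dimensional reflexive polytope, v a root of P, and w a lattice point on the boundary of P with w ∉ F_v and w ≠ −v. Then ⟨η_v, w⟩ ≥ 0, the lattice point v + w lies on the boundary of P, and the lattice point (⟨η_v, w⟩ + 1)·v + w lies in the facet F_v. -/

import Mathlib

open Finset Set Pointwise

noncomputable section

/-- The standard pairing `⟨x, y⟩ = ∑ i, x i * y i` on `ℝ^d`. -/
def pairR {d : ℕ} (x y : Fin d → ℝ) : ℝ := ∑ i, x i * y i

/-- A point of `ℝ^d` is a lattice point if all its coordinates are integers. -/
def IsLatticePt {d : ℕ} (x : Fin d → ℝ) : Prop := ∀ i, ∃ n : ℤ, x i = (n : ℝ)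

/-- A lattice polytope: the convex hull of finitely many lattice points. -/
def IsLatticePolytope {d : ℕ} (P : Set (Fin d → ℝ)) : Prop :=
  ∃ V : Finset (Fin d → ℝ), (∀ x ∈ V, IsLatticePt x) ∧
    P = convexHull ℝ (V : Set (Fin d → ℝ))

/-- The dual polytope `P* = {y : ⟨x, y⟩ ≥ -1 for all x ∈ P}`. -/
def polarDual {d : ℕ} (P : Set (Fin d → ℝ)) : Set (Fin d → ℝ) :=
  {y | ∀ x ∈ P, -1 ≤ pairR x y}

/-- A reflexive polytope: a (full-dimensional) lattice polytope with `0` in its interior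
whose dual is again a lattice polytope. -/
def IsReflexive {d : ℕ} (P : Set (Fin d → ℝ)) : Prop :=
  IsLatticePolytope P ∧ (0 : Fin d → ℝ) ∈ interior P ∧ IsLatticePolytope (polarDual P)

/-- `F` is the facet of `P` with (unique) inner normal `η` normalized by `⟨η, F⟩ = -1`:
`F` is the part of `P` where the valid inequality `⟨η, ·⟩ ≥ -1` is tight, and `F` has
dimension `d - 1`. -/
def IsFacetNormal {d : ℕ} (P : Set (Fin d → ℝ)) (η : Fin d → ℝ)
    (F : Set (Fin d → ℝ)) : Prop :=
  (∀ x ∈ P, -1 ≤ pairR η x) ∧ F = {x ∈ P | pairR η x = -1} ∧ F.Nonempty ∧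
    Module.finrank ℝ (vectorSpan ℝ F) = d - 1

/-- `F` is a facet ((d-1)-dimensional face) of `P`. -/
def IsFacet {d : ℕ} (P F : Set (Fin d → ℝ)) : Prop := ∃ η, IsFacetNormal P η F

/-- A root of `P`: a lattice point in the relative interior of a facet of `P`. -/
def IsRoot {d : ℕ} (P : Set (Fin d → ℝ)) (m : Fin d → ℝ) : Prop :=
  IsLatticePt m ∧ ∃ F, IsFacet P F ∧ m ∈ intrinsicInterior ℝ F

/-- The facet `F_m` of `P` containing the root `m` in its relative interior
(for a root `m` there is exactly one such facet). -/
def rootFacet {d : ℕ} (P : Set (Fin d → ℝ)) (m : Fin d → ℝ) : Set (Fin d → ℝ) :=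
  ⋃₀ {F | IsFacet P F ∧ m ∈ intrinsicInterior ℝ F}

/-- The inner normal `η_m = η_{F_m}` of the facet of `P` containing the root `m`. -/
def rootNormal {d : ℕ} (P : Set (Fin d → ℝ)) (m : Fin d → ℝ) : Fin d → ℝ :=
  Classical.epsilon fun η => IsFacetNormal P η (rootFacet P m)

/-- The real extension of the `ℤ`-linear map on the lattice given by an integer matrix. -/
def intMatMap {d : ℕ} (A : Matrix (Fin d) (Fin d) ℤ) (x : Fin d → ℝ) : Fin d → ℝ :=
  (A.map (Int.cast : ℤ → ℝ)).mulVec x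

/-- `P` and `Q` are isomorphic as lattice polytopes: some `g ∈ GL_d(ℤ)` has real
extension mapping `P` onto `Q`. -/
def IsLatticeIso {d : ℕ} (P Q : Set (Fin d → ℝ)) : Prop :=
  ∃ A : Matrix (Fin d) (Fin d) ℤ, IsUnit A.det ∧ intMatMap A '' P = Q

end

open Filter Topology

/-!
The normal `η_v` is determined by any relative interior point of its facet, so the only point of
`P*` pairing to `-1` with `v` is `η_v`. Hence `η_v` is a vertex of `P*`, and every other vertex
`y` is a lattice point with `⟨v, y⟩ > -1`, i.e. `⟨v, y⟩ ≥ 0`. By the bipolar theorem `P` is cut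
out by the inequalities `⟨·, y⟩ ≥ -1` for the vertices `y` of `P*`, and these show that
`s • v + w ∈ P` for `0 ≤ s ≤ ⟨η_v, w⟩ + 1`; for the largest `s` the inequality of `F_v` is tight.
The integer `⟨η_v, w⟩` exceeds `-1` because `w ∉ F_v`. Finally `v + w` is a nonzero lattice point
of `P`, and `0` is the only interior lattice point of a reflexive polytope, since an interior
lattice point pairs nonnegatively with all vertices of `P*`, so its whole ray lies in `P`.
-/

section Pairing

variable {d : ℕ}

lemma pairR_eq_dotProduct (x y : Fin d → ℝ) : pairR x y = x ⬝ᵥ y := rfl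

lemma pairR_comm (x y : Fin d → ℝ) : pairR x y = pairR y x := dotProduct_comm x y

lemma IsLatticePt.add {x y : Fin d → ℝ} (hx : IsLatticePt x) (hy : IsLatticePt y) :
    IsLatticePt (x + y) := fun i => by
  obtain ⟨a, ha⟩ := hx i
  obtain ⟨b, hb⟩ := hy i
  exact ⟨a + b, by simp [ha, hb]⟩

lemma IsLatticePt.exists_pairR_eq_intCast {x y : Fin d → ℝ} (hx : IsLatticePt x)
    (hy : IsLatticePt y) : ∃ n : ℤ, pairR x y = n := by
  choose a ha using hx
  choose b hb using hy
  exact ⟨∑ i, a i * b i, by simp [pairR, ha, hb]⟩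

lemma IsLatticePt.pairR_nonneg_of_neg_one_lt {x y : Fin d → ℝ} (hx : IsLatticePt x)
    (hy : IsLatticePt y) (h : -1 < pairR x y) : 0 ≤ pairR x y := by
  obtain ⟨n, hn⟩ := hx.exists_pairR_eq_intCast hy
  rw [hn] at h ⊢
  have : -1 < n := by exact_mod_cast h
  exact_mod_cast (by omega : 0 ≤ n)

end Pairing

lemma exists_pos_add_smul_sub_mem_of_mem_intrinsicInterior {E : Type*}
    [NormedAddCommGroup E] [NormedSpace ℝ E] {F : Set E} {v x : E}
    (hv : v ∈ intrinsicInterior ℝ F) (hx : x ∈ F) : ∃ t : ℝ, 0 < t ∧ v + t • (v - x) ∈ F := by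
  obtain ⟨v', hv', rfl⟩ := hv
  let γ : ℝ → affineSpan ℝ F := fun t =>
    ⟨v' + t • ((v' : E) - x), by
      simpa [vsub_eq_sub, vadd_eq_add, add_comm] using
        (affineSpan ℝ F).smul_vsub_vadd_mem t v'.2 (subset_affineSpan ℝ F hx) v'.2⟩
  have hγ : Continuous γ := by fun_prop
  have hγ0 : γ 0 = v' := by ext; simp [γ]
  have hnhds : ∀ᶠ t in 𝓝 (0 : ℝ), γ t ∈ ((↑) ⁻¹' F : Set (affineSpan ℝ F)) :=
    hγ.continuousAt.preimage_mem_nhds (by rw [hγ0]; exact mem_interior_iff_mem_nhds.mp hv')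
  obtain ⟨t, hγt, ht⟩ :=
    ((hnhds.filter_mono (nhdsWithin_le_nhds (s := Ioi 0))).and self_mem_nhdsWithin).exists
  exact ⟨t, ht, hγt⟩

lemma LinearMap.eq_of_isMinOn_of_mem_intrinsicInterior {E : Type*} [NormedAddCommGroup E]
    [NormedSpace ℝ E] (f : E →ₗ[ℝ] ℝ) {F : Set E} {v x : E} (hmin : IsMinOn f F v)
    (hv : v ∈ intrinsicInterior ℝ F) (hx : x ∈ F) : f x = f v := by
  obtain ⟨t, ht, hmem⟩ := exists_pos_add_smul_sub_mem_of_mem_intrinsicInterior hv hx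
  have hle : f v ≤ f v + t * (f v - f x) := by simpa using hmin hmem
  have hge : f v ≤ f x := hmin hx
  nlinarith

section Facets

variable {d : ℕ} {P F : Set (Fin d → ℝ)} {η v y : Fin d → ℝ}

lemma IsFacetNormal.mem_iff (hF : IsFacetNormal P η F) {x : Fin d → ℝ} :
    x ∈ F ↔ x ∈ P ∧ pairR η x = -1 := by
  rw [hF.2.1]; rfl

lemma IsFacetNormal.mem_polarDual (hF : IsFacetNormal P η F) : η ∈ polarDual P :=
  fun x hx => pairR_comm η x ▸ hF.1 x hx

lemma IsFacetNormal.span_eq_top (hF : IsFacetNormal P η F) : Submodule.span ℝ F = ⊤ := by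
  obtain ⟨x₀, hx₀⟩ := hF.2.2.1
  have hperp : vectorSpan ℝ F ≤ LinearMap.ker (dotProductBilin ℝ ℝ η) := by
    rw [vectorSpan_def, Submodule.span_le]
    rintro _ ⟨a, ha, b, hb, rfl⟩
    simp [vsub_eq_sub, ← pairR_eq_dotProduct, (hF.mem_iff.mp ha).2, (hF.mem_iff.mp hb).2]
  have hlt : vectorSpan ℝ F < Submodule.span ℝ F := by
    refine SetLike.lt_iff_le_and_exists.mpr ⟨?_, x₀, Submodule.subset_span hx₀, fun h => ?_⟩
    · rw [vectorSpan_def, Submodule.span_le]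
      rintro _ ⟨a, ha, b, hb, rfl⟩
      exact Submodule.sub_mem _ (Submodule.subset_span ha) (Submodule.subset_span hb)
    · simpa [← pairR_eq_dotProduct, (hF.mem_iff.mp hx₀).2] using hperp h
  apply Submodule.eq_top_of_finrank_eq
  have := Submodule.finrank_lt_finrank_of_lt hlt
  have := Submodule.finrank_le (Submodule.span ℝ F)
  simp only [Module.finrank_fin_fun, hF.2.2.2] at *
  omega

lemma IsFacetNormal.eq_of_mem_polarDual (hF : IsFacetNormal P η F)
    (hv : v ∈ intrinsicInterior ℝ F) (hy : y ∈ polarDual P) (hyv : pairR y v = -1) : y = η := by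
  let f := dotProductBilin ℝ ℝ (y - η)
  have hf : ∀ x ∈ F, f x = pairR x y + 1 := fun x hx => by
    simp [f, ← pairR_eq_dotProduct, (hF.mem_iff.mp hx).2, pairR_comm y x]
  have hmin : IsMinOn f F v := isMinOn_iff.mpr fun x hx => by
    simp only [hf x hx, hf v (intrinsicInterior_subset hv), pairR_comm v, hyv]
    linarith [hy x (hF.mem_iff.mp hx).1]
  have hker : Submodule.span ℝ F ≤ LinearMap.ker f := by
    rw [Submodule.span_le]
    intro x hx
    rw [SetLike.mem_coe, LinearMap.mem_ker,
      f.eq_of_isMinOn_of_mem_intrinsicInterior hmin hv hx, hf v (intrinsicInterior_subset hv),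
      pairR_comm, hyv, neg_add_cancel]
  have : f (y - η) = 0 := hker (hF.span_eq_top ▸ Submodule.mem_top)
  rwa [dotProductBilin_apply_apply, dotProduct_self_eq_zero, sub_eq_zero] at this

lemma IsFacetNormal.mem_of_polarDual_eq_convexHull (hF : IsFacetNormal P η F)
    (hv : v ∈ intrinsicInterior ℝ F) {V' : Set (Fin d → ℝ)}
    (hV' : polarDual P = convexHull ℝ V') : η ∈ V' := by
  have hvP : v ∈ P := (hF.mem_iff.mp (intrinsicInterior_subset hv)).1
  have hηv : pairR η v = -1 := (hF.mem_iff.mp (intrinsicInterior_subset hv)).2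
  obtain ⟨y, hyV', hyv⟩ :=
    ((dotProductBilin ℝ ℝ v).concaveOn convex_univ).exists_le_of_mem_convexHull
      (subset_univ _) (hV' ▸ hF.mem_polarDual)
  have hy : y ∈ polarDual P := hV' ▸ subset_convexHull ℝ V' hyV'
  simp only [dotProductBilin_apply_apply, ← pairR_eq_dotProduct, pairR_comm v, hηv] at hyv
  have hyv' : pairR y v = -1 := le_antisymm hyv (pairR_comm v y ▸ hy v hvP)
  exact hF.eq_of_mem_polarDual hv hy hyv' ▸ hyV'

lemma IsFacetNormal.pairR_nonneg_of_ne (hF : IsFacetNormal P η F)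
    (hv : v ∈ intrinsicInterior ℝ F) (hvlat : IsLatticePt v) (hy : y ∈ polarDual P)
    (hylat : IsLatticePt y) (hne : y ≠ η) : 0 ≤ pairR v y := by
  have hvP : v ∈ P := (hF.mem_iff.mp (intrinsicInterior_subset hv)).1
  refine hvlat.pairR_nonneg_of_neg_one_lt hylat (lt_of_le_of_ne (hy v hvP) fun h => hne ?_)
  exact hF.eq_of_mem_polarDual hv hy (pairR_comm y v ▸ h.symm)

end Facets

lemma mem_of_forall_mem_polarDual {d : ℕ} {P : Set (Fin d → ℝ)} (hconv : Convex ℝ P)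
    (hclosed : IsClosed P) (h0 : (0 : Fin d → ℝ) ∈ P) {z : Fin d → ℝ}
    (hz : ∀ y ∈ polarDual P, -1 ≤ pairR z y) : z ∈ P := by
  by_contra hzP
  obtain ⟨f, u, hfu, huz⟩ := geometric_hahn_banach_closed_point hconv hclosed hzP
  have hu : 0 < u := by simpa using hfu 0 h0
  let y : Fin d → ℝ := fun i => -f (fun j => if i = j then 1 else 0) / u
  have hfy : ∀ x, pairR x y = -f x / u := fun x => by
    have hfx : f x = ∑ i, x i * f (fun j => if i = j then 1 else 0) :=
      LinearMap.pi_apply_eq_sum_univ (f : (Fin d → ℝ) →ₗ[ℝ] ℝ) x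
    simp only [pairR, y, hfx, Finset.sum_div, ← Finset.sum_neg_distrib]
    exact Finset.sum_congr rfl fun i _ => by ring
  have hy : y ∈ polarDual P := fun x hx => by
    rw [hfy, le_div_iff₀ hu]
    linarith [hfu x hx]
  have := hz y hy
  rw [hfy, le_div_iff₀ hu] at this
  linarith

lemma Bornology.IsBounded.eq_zero_of_forall_smul_mem {E : Type*} [NormedAddCommGroup E]
    [NormedSpace ℝ E] {s : Set E} (hs : IsBounded s) {x : E} (h : ∀ t : ℝ, 0 ≤ t → t • x ∈ s) :
    x = 0 := by
  obtain ⟨C, hC⟩ := hs.exists_norm_le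
  by_contra hx
  have hx' : 0 < ‖x‖ := norm_pos_iff.mpr hx
  have hC0 : 0 ≤ C := (norm_nonneg _).trans (hC _ (h 0 le_rfl))
  have := hC _ (h ((C + 1) / ‖x‖) (by positivity))
  rw [norm_smul, Real.norm_of_nonneg (by positivity), div_mul_cancel₀ _ hx'.ne'] at this
  linarith

section Reflexive

variable {d : ℕ} {P : Set (Fin d → ℝ)}

lemma IsLatticePolytope.convex (hP : IsLatticePolytope P) : Convex ℝ P := by
  obtain ⟨V, -, rfl⟩ := hP
  exact convex_convexHull ℝ _

lemma IsLatticePolytope.isCompact (hP : IsLatticePolytope P) : IsCompact P := by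
  obtain ⟨V, -, rfl⟩ := hP
  exact V.finite_toSet.isCompact_convexHull ℝ

lemma IsReflexive.mem_of_forall_neg_one_le_pairR (hP : IsReflexive P) {V' : Set (Fin d → ℝ)}
    (hV' : polarDual P = convexHull ℝ V') {z : Fin d → ℝ} (hz : ∀ y ∈ V', -1 ≤ pairR z y) :
    z ∈ P := by
  refine mem_of_forall_mem_polarDual hP.1.convex hP.1.isCompact.isClosed
    (interior_subset hP.2.1) fun y hy => ?_
  rw [hV'] at hy
  exact convexHull_min hz ((convex_Ici (-1)).linear_preimage (dotProductBilin ℝ ℝ z)) hy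

lemma IsReflexive.eq_zero_of_mem_interior (hP : IsReflexive P) {x : Fin d → ℝ}
    (hx : IsLatticePt x) (hxi : x ∈ interior P) : x = 0 := by
  obtain ⟨V', hV'lat, hV'⟩ := hP.2.2
  have hnhds : ∀ᶠ c in 𝓝 (1 : ℝ), c • x ∈ P :=
    (continuous_id.smul continuous_const).continuousAt.preimage_mem_nhds
      (by simpa using mem_interior_iff_mem_nhds.mp hxi)
  obtain ⟨c, hcx, hc⟩ :=
    ((hnhds.filter_mono (nhdsWithin_le_nhds (s := Ioi 1))).and self_mem_nhdsWithin).exists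
  have hc1 : (1 : ℝ) < c := hc
  -- `⟨x, y⟩ ≥ -1 / c > -1` is an integer for every vertex `y` of `P*`
  have hnonneg : ∀ y ∈ (V' : Set (Fin d → ℝ)), 0 ≤ pairR x y := fun y hy => by
    have hyP : y ∈ polarDual P := hV' ▸ subset_convexHull ℝ _ hy
    have hcy : -1 ≤ c * pairR x y := by simpa [pairR_eq_dotProduct] using hyP _ hcx
    refine hx.pairR_nonneg_of_neg_one_lt (hV'lat y hy) ?_
    nlinarith
  refine hP.1.isCompact.isBounded.eq_zero_of_forall_smul_mem fun t ht =>
    hP.mem_of_forall_neg_one_le_pairR hV' fun y hy => ?_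
  have := mul_nonneg ht (hnonneg y hy)
  simp only [pairR_eq_dotProduct, smul_dotProduct, smul_eq_mul] at this ⊢
  linarith

/-- Only the inequality of `F` can cut off `s • v + w`: every other vertex of `P*` pairs
nonnegatively with `v`. -/
lemma IsReflexive.smul_add_mem (hP : IsReflexive P) {F : Set (Fin d → ℝ)} {η v w : Fin d → ℝ}
    (hF : IsFacetNormal P η F) (hv : v ∈ intrinsicInterior ℝ F) (hvlat : IsLatticePt v)
    (hw : w ∈ P) {s : ℝ} (hs₀ : 0 ≤ s) (hs : s ≤ pairR η w + 1) : s • v + w ∈ P := by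
  obtain ⟨V', hV'lat, hV'⟩ := hP.2.2
  have hηv : pairR v η = -1 := pairR_comm η v ▸ (hF.mem_iff.mp (intrinsicInterior_subset hv)).2
  refine hP.mem_of_forall_neg_one_le_pairR hV' fun y hy => ?_
  have hyP : y ∈ polarDual P := hV' ▸ subset_convexHull ℝ _ hy
  have hsplit : pairR (s • v + w) y = s * pairR v y + pairR w y := by
    simp [pairR_eq_dotProduct, add_dotProduct, smul_dotProduct]
  rw [hsplit]
  by_cases hyη : y = η
  · subst hyη
    rw [hηv, pairR_comm w]
    linarith
  · have := mul_nonneg hs₀ (hF.pairR_nonneg_of_ne hv hvlat hyP (hV'lat y hy) hyη)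
    linarith [hyP w hw]

end Reflexive

/-- Let `v` be a root of the reflexive polytope `P` (with facet `F_v` and normal `η_v`)
and `w` a lattice point on the boundary of `P` with `w ∉ F_v` and `w ≠ -v`. Then
`⟨η_v, w⟩ ≥ 0`, the lattice point `v + w` lies on the boundary of `P`, and
`(⟨η_v, w⟩ + 1)·v + w` lies in the facet `F_v`. -/
theorem stmt11 {d : ℕ} (P : Set (Fin d → ℝ)) (hP : IsReflexive P)
    (v : Fin d → ℝ) (hv : IsRoot P v)
    (Fv : Set (Fin d → ℝ)) (ηv : Fin d → ℝ) (hFv : IsFacetNormal P ηv Fv)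
    (hvFv : v ∈ intrinsicInterior ℝ Fv)
    (w : Fin d → ℝ) (hwlat : IsLatticePt w) (hw : w ∈ frontier P)
    (hwF : w ∉ Fv) (hwv : w ≠ -v) :
    0 ≤ pairR ηv w ∧ v + w ∈ frontier P ∧
      (pairR ηv w + 1) • v + w ∈ Fv := by
  obtain ⟨V', hV'lat, hV'⟩ := hP.2.2
  have hclosed : IsClosed P := hP.1.isCompact.isClosed
  have hwP : w ∈ P := (hclosed.frontier_eq ▸ hw).1
  have hηvlat : IsLatticePt ηv := hV'lat _ (hFv.mem_of_polarDual_eq_convexHull hvFv hV')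
  have hηvv : pairR ηv v = -1 := (hFv.mem_iff.mp (intrinsicInterior_subset hvFv)).2
  have hk : 0 ≤ pairR ηv w :=
    hηvlat.pairR_nonneg_of_neg_one_lt hwlat (lt_of_le_of_ne (hFv.1 w hwP) fun h =>
      hwF (hFv.mem_iff.mpr ⟨hwP, h.symm⟩))
  have hvw : v + w ∈ P := by
    simpa using hP.smul_add_mem hFv hvFv hv.1 hwP zero_le_one (by linarith)
  refine ⟨hk, ?_, ?_⟩
  · rw [hclosed.frontier_eq]
    refine ⟨hvw, fun hint => hwv ?_⟩
    exact eq_neg_of_add_eq_zero_right (hP.eq_zero_of_mem_interior (hv.1.add hwlat) hint)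
  · refine hFv.mem_iff.mpr ⟨hP.smul_add_mem hFv hvFv hv.1 hwP (by linarith) le_rfl, ?_⟩
    simp only [pairR_eq_dotProduct, dotProduct_add, dotProduct_smul, smul_eq_mul] at hηvv ⊢
    rw [hηvv]
    ring
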